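/- arXiv:1606.02673 — 5 statements merged into one kernel-verified Lean document; each statement's English description precedes it below -/
import Mathlib

section
/- Let d ≥ 1 and let λ, μ be partitions such that there is a chain of partitions λ = μ^{(0)} ≤ μ^{(1)} ≤ … ≤ μ^{(d)} = μ in which each skew diagram μ^{(i)}/μ^{(i−1)} contains at most one box in each column. Then the total number of boxes of μ below its first d rows is at most |λ|, i.e. Σ_{i > d} μ_i ≤ |λ|. (Equivalently: if μ has at least d parts and μ = ν[n_1,…,n_d] is its unique presentation as a d-padded partition, then |ν| ≤ |λ|.) -/
/-- A partition, encoded as the weakly decreasing, eventually zero sequence of its parts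
(0-indexed: `μ 0` is the first part `μ_1`). -/
def IsPartition (μ : ℕ → ℕ) : Prop := Antitone μ ∧ ∃ N, ∀ n ≥ N, μ n = 0

/-- The size `|μ|` of a partition: the sum of its parts. -/
noncomputable def psize (μ : ℕ → ℕ) : ℕ := ∑ᶠ i, μ i

/-- The skew diagram `μ/ν` (boxes `(i,j)` with `ν i ≤ j < μ i`, rows and columns 0-indexed)
has at most one box in each column. -/
def AtMostOnePerColumn (ν μ : ℕ → ℕ) : Prop :=
  ∀ j i i', ν i ≤ j → j < μ i → ν i' ≤ j → j < μ i' → i = i'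

lemma horiz_strip_step (ν μ : ℕ → ℕ) (hν : Antitone ν) (hμ : Antitone μ)
    (h : AtMostOnePerColumn ν μ) (k : ℕ) : μ (k + 1) ≤ ν k := by
  by_contra h'
  push_neg at h'
  have hcol := h (ν k) k (k + 1) le_rfl
    (lt_of_lt_of_le h' (hμ (Nat.le_succ k)))
    (hν (Nat.le_succ k)) h'
  omega

/-- If there is a chain of partitions `λ = c 0 ≤ c 1 ≤ … ≤ c d = μ` in which each successive
skew diagram has at most one box per column, then the number of boxes of `μ` below its first
`d` rows is at most `|λ|`:  `Σ_{i > d} μ_i ≤ |λ|`. -/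
theorem boxes_below_d_rows_le (d : ℕ) (hd : 1 ≤ d) (lam μ : ℕ → ℕ) (c : ℕ → ℕ → ℕ)
    (hpart : ∀ i ≤ d, IsPartition (c i))
    (h0 : c 0 = lam) (hdth : c d = μ)
    (hstep : ∀ i < d,
      (∀ j, c i j ≤ c (i + 1) j) ∧ AtMostOnePerColumn (c i) (c (i + 1))) :
    ∑ᶠ i : ℕ, μ (i + d) ≤ psize lam := by
  have key : ∀ i ≤ d, ∀ k, c i (k + i) ≤ lam k := by
    intro i
    induction i with
    | zero => intro _ k; simp [h0]
    | succ n ih =>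
      intro hn k
      have hn' : n ≤ d := Nat.le_of_succ_le hn
      have h1 : c (n + 1) (k + (n + 1)) ≤ c n (k + n) := by
        have := horiz_strip_step (c n) (c (n + 1)) (hpart n hn').1
          (hpart (n + 1) hn).1 (hstep n hn).2 (k + n)
        simpa [Nat.add_assoc] using this
      exact h1.trans (ih hn' k)
  have hμle : ∀ k, μ (k + d) ≤ lam k := by
    intro k; rw [← hdth]; exact key d le_rfl k
  obtain ⟨N, hN⟩ : ∃ N, ∀ n ≥ N, lam n = 0 := by
    obtain ⟨N, hN⟩ := (hpart 0 (Nat.zero_le d)).2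
    exact ⟨N, fun n hn => by rw [← h0]; exact hN n hn⟩
  have hsub1 : Function.support (fun k => μ (k + d)) ⊆ (Finset.range N : Finset ℕ) := by
    intro k hk
    simp only [Function.mem_support] at hk
    by_contra hkN
    simp only [Finset.coe_range, Set.mem_Iio, not_lt] at hkN
    exact hk (Nat.le_zero.mp ((hμle k).trans_eq (hN k hkN)))
  have hsub2 : Function.support lam ⊆ (Finset.range N : Finset ℕ) := by
    intro k hk
    simp only [Function.mem_support] at hk
    by_contra hkN
    simp only [Finset.coe_range, Set.mem_Iio, not_lt] at hkN
    exact hk (hN k hkN)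
  rw [finsum_eq_sum_of_support_subset _ hsub1]
  rw [psize, finsum_eq_sum_of_support_subset _ hsub2]
  exact Finset.sum_le_sum fun k _ => hμle k
end

section
/- Fix d ≥ 1, partitions λ and μ, and integers n_1 ≥ … ≥ n_d ≥ |μ| + μ_1. For each integer l ≥ 0, let c_l denote the number of chains of partitions λ = ν^{(0)} ≤ ν^{(1)} ≤ … ≤ ν^{(d)} = μ[n_1+l, …, n_d+l] in which each skew diagram ν^{(i)}/ν^{(i−1)} contains at most one box in each column. Then c_l takes the same value for all l with n_d + l ≥ λ_1 + |λ|. -/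
/-- The `r`-padded partition `μ[n_1,…,n_r] = (n_1 − |μ|, …, n_r − |μ|, μ_1, μ_2, …)`. -/
noncomputable def pad (r : ℕ) (n : Fin r → ℕ) (lam : ℕ → ℕ) : ℕ → ℕ :=
  fun i => if h : i < r then n ⟨i, h⟩ - psize lam else lam (i - r)

/-- The number of chains of partitions `lam = c 0 ≤ c 1 ≤ … ≤ c d = μ` in which each
successive skew diagram has at most one box in each column (by Pieri's rule, the
multiplicity of `S^μ` in the free FI_d-module generated by `S^lam`). -/
noncomputable def chainCount (d : ℕ) (lam μ : ℕ → ℕ) : ℕ :=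
  Nat.card {c : Fin (d + 1) → ℕ → ℕ //
    c 0 = lam ∧ c (Fin.last d) = μ ∧ (∀ i, IsPartition (c i)) ∧
    ∀ i : Fin d, (∀ j, c i.castSucc j ≤ c i.succ j) ∧
      AtMostOnePerColumn (c i.castSucc) (c i.succ)}

theorem IsPartition.hasFiniteSupport {μ : ℕ → ℕ} (h : IsPartition μ) :
    Function.HasFiniteSupport μ := by
  obtain ⟨N, hN⟩ := h.2
  refine (Set.finite_Iio N).subset fun i hi => Set.mem_Iio.2 ?_
  by_contra! hNi
  exact hi (hN i hNi)

theorem psize_mono {μ lam : ℕ → ℕ} (hμ : IsPartition μ) (hlam : IsPartition lam)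
    (h : ∀ i, μ i ≤ lam i) : psize μ ≤ psize lam :=
  finsum_le_finsum' hμ.hasFiniteSupport hlam.hasFiniteSupport h

theorem pad_apply_of_lt {r : ℕ} (m : Fin r → ℕ) (μ : ℕ → ℕ) {i : ℕ} (h : i < r) :
    pad r m μ i = m ⟨i, h⟩ - psize μ := by
  simp [pad, h]

@[simp]
theorem pad_apply_add (r : ℕ) (m : Fin r → ℕ) (μ : ℕ → ℕ) (i : ℕ) : pad r m μ (i + r) = μ i := by
  simp [pad]

def Interlaces (ν μ : ℕ → ℕ) : Prop := ∀ i, ν i ≤ μ i ∧ μ (i + 1) ≤ ν i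

theorem interlaces_iff {ν μ : ℕ → ℕ} (hν : Antitone ν) (hμ : Antitone μ) :
    Interlaces ν μ ↔ (∀ j, ν j ≤ μ j) ∧ AtMostOnePerColumn ν μ := by
  constructor
  · intro h
    refine ⟨fun j => (h j).1, fun j i i' h₁ h₂ h₃ h₄ => ?_⟩
    by_contra hne
    wlog hlt : i < i' generalizing i i'
    · exact this i' i h₃ h₄ h₁ h₂ (Ne.symm hne) (by omega)
    have := hμ (show i + 1 ≤ i' by omega)
    have := (h i).2
    omega
  · rintro ⟨hle, hcol⟩ i
    refine ⟨hle i, ?_⟩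
    by_contra! hlt
    have := hcol (ν i) i (i + 1) le_rfl (hlt.trans_le (hμ i.le_succ)) (hν i.le_succ) hlt
    omega

def IsInterlacingChain (d : ℕ) (c : Fin (d + 1) → ℕ → ℕ) : Prop :=
  (∀ k, IsPartition (c k)) ∧ ∀ k : Fin d, Interlaces (c k.castSucc) (c k.succ)

theorem chainCount_eq_card (d : ℕ) (lam ν : ℕ → ℕ) :
    chainCount d lam ν = Nat.card {c : Fin (d + 1) → ℕ → ℕ //
      c 0 = lam ∧ c (Fin.last d) = ν ∧ IsInterlacingChain d c} :=
  Nat.card_congr <| Equiv.subtypeEquivRight fun _ =>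
    and_congr_right' <| and_congr_right' <| and_congr_right fun hpart =>
      forall_congr' fun k => (interlaces_iff (hpart k.castSucc).1 (hpart k.succ).1).symm

namespace IsInterlacingChain

variable {d : ℕ} {c : Fin (d + 1) → ℕ → ℕ}

theorem apply_add_le (hc : IsInterlacingChain d c) (k : Fin (d + 1)) (i : ℕ) :
    c k (i + k) ≤ c 0 i := by
  induction k using Fin.induction generalizing i with
  | zero => simp
  | succ k ih =>
    calc c k.succ (i + k.succ) = c k.succ (i + k + 1) := by simp [add_assoc]
      _ ≤ c k.castSucc (i + k) := (hc.2 k (i + k)).2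
      _ ≤ c 0 i := by simpa using ih i

theorem apply_le_of_le (hc : IsInterlacingChain d c) {k : Fin (d + 1)} {i : ℕ} (hki : k ≤ i) :
    c k i ≤ c 0 0 := by
  obtain ⟨j, rfl⟩ := Nat.exists_eq_add_of_le' hki
  exact (hc.apply_add_le k j).trans ((hc.1 0).1 (Nat.zero_le j))

theorem le_apply_of_lt (hc : IsInterlacingChain d c) {k : Fin (d + 1)} {i : ℕ} (hik : i < k) :
    c (Fin.last d) (d - 1) ≤ c k i := by
  induction k using Fin.reverseInduction generalizing i with
  | last => exact (hc.1 _).1 (by simp at hik; omega)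
  | cast k ih => exact (ih (i := i + 1) (by simp at hik ⊢; omega)).trans (hc.2 k i).2

end IsInterlacingChain

theorem le_of_chainCount_pos {d : ℕ} {lam ν : ℕ → ℕ} (h : 0 < chainCount d lam ν) (i : ℕ) :
    ν (i + d) ≤ lam i := by
  rw [chainCount_eq_card, Nat.card_pos_iff] at h
  obtain ⟨⟨c, h0, hlast, hc⟩⟩ := h.1
  simpa [h0, hlast] using hc.apply_add_le (Fin.last d) i

def shiftRows (δ a : ℕ) (f : ℕ → ℕ) (i : ℕ) : ℕ := if i < a then f i + δ else f i

def unshiftRows (δ a : ℕ) (f : ℕ → ℕ) (i : ℕ) : ℕ := if i < a then f i - δ else f i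

section ShiftRows

variable {δ a : ℕ} {f ν μ : ℕ → ℕ}

@[simp]
theorem shiftRows_zero (δ : ℕ) (f : ℕ → ℕ) : shiftRows δ 0 f = f := by
  funext i
  simp [shiftRows]

@[simp]
theorem unshiftRows_zero (δ : ℕ) (f : ℕ → ℕ) : unshiftRows δ 0 f = f := by
  funext i
  simp [unshiftRows]

@[simp]
theorem unshiftRows_shiftRows (δ a : ℕ) (f : ℕ → ℕ) :
    unshiftRows δ a (shiftRows δ a f) = f := by
  funext i
  simp only [unshiftRows, shiftRows]
  split_ifs <;> omega

theorem shiftRows_unshiftRows (h : ∀ i < a, δ ≤ f i) : shiftRows δ a (unshiftRows δ a f) = f := by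
  funext i
  simp only [unshiftRows, shiftRows]
  split_ifs with hi
  · have := h i hi
    omega
  · rfl

theorem IsPartition.shiftRows (hf : IsPartition f) : IsPartition (shiftRows δ a f) := by
  obtain ⟨N, hN⟩ := hf.2
  refine ⟨fun i j hij => ?_, max N a, fun i hi => ?_⟩
  · have := hf.1 hij
    simp only [_root_.shiftRows]
    split_ifs <;> omega
  · simp [_root_.shiftRows, hN i (le_of_max_le_left hi), not_lt.2 (le_of_max_le_right hi)]

theorem IsPartition.unshiftRows (hf : IsPartition f)
    (hgap : ∀ i j, i < a → a ≤ j → f j + δ ≤ f i) : IsPartition (unshiftRows δ a f) := by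
  obtain ⟨N, hN⟩ := hf.2
  refine ⟨fun i j hij => ?_, N, fun i hi => ?_⟩
  · have := hf.1 hij
    simp only [_root_.unshiftRows]
    split_ifs with hj hi hi
    · omega
    · omega
    · have := hgap i j hi (not_lt.1 hj)
      omega
    · exact this
  · simp [_root_.unshiftRows, hN i hi]

theorem Interlaces.shiftRows (h : Interlaces ν μ) :
    Interlaces (shiftRows δ a ν) (shiftRows δ (a + 1) μ) := fun i => by
  have := h i
  simp only [_root_.shiftRows]
  split_ifs <;> omega

theorem Interlaces.unshiftRows (h : Interlaces ν μ) (hgap : ν a + δ ≤ μ a) :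
    Interlaces (unshiftRows δ a ν) (unshiftRows δ (a + 1) μ) := fun i => by
  have := h i
  simp only [_root_.unshiftRows]
  rcases lt_trichotomy i a with hia | rfl | hia <;> split_ifs <;> omega

end ShiftRows

theorem pad_add_eq_shiftRows {r : ℕ} {m : Fin r → ℕ} {μ : ℕ → ℕ} (hm : ∀ i, psize μ ≤ m i)
    (δ : ℕ) : pad r (fun i => m i + δ) μ = shiftRows δ r (pad r m μ) := by
  funext i
  simp only [pad, shiftRows]
  split_ifs with hi
  · have := hm ⟨i, hi⟩
    omega
  · rfl

namespace IsInterlacingChain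

variable {d : ℕ} {c : Fin (d + 1) → ℕ → ℕ}

theorem shiftRows (hc : IsInterlacingChain d c) (δ : ℕ) :
    IsInterlacingChain d fun k => shiftRows δ k (c k) :=
  ⟨fun k => (hc.1 k).shiftRows, fun k => by simpa using (hc.2 k).shiftRows (δ := δ) (a := k)⟩

theorem unshiftRows (hc : IsInterlacingChain d c) {δ : ℕ}
    (hgap : c 0 0 + δ ≤ c (Fin.last d) (d - 1)) :
    IsInterlacingChain d fun k => unshiftRows δ k (c k) := by
  refine ⟨fun k => (hc.1 k).unshiftRows fun i j hik hkj => ?_, fun k => ?_⟩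
  · have := hc.apply_le_of_le hkj
    have := hc.le_apply_of_lt hik
    omega
  · have := hc.apply_le_of_le (k := k.castSucc) (i := k) le_rfl
    have := hc.le_apply_of_lt (k := k.succ) (i := k) (by simp)
    simpa using (hc.2 k).unshiftRows (δ := δ) (a := k) (by omega)

end IsInterlacingChain

theorem chainCount_shiftRows {d : ℕ} (hd : 0 < d) {lam ν : ℕ → ℕ} (δ : ℕ)
    (h : lam 0 ≤ ν (d - 1)) : chainCount d lam (shiftRows δ d ν) = chainCount d lam ν := by
  have hgap : ∀ c : Fin (d + 1) → ℕ → ℕ, c 0 = lam → c (Fin.last d) = shiftRows δ d ν →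
      c 0 0 + δ ≤ c (Fin.last d) (d - 1) := by
    rintro c h0 hlast
    simp [h0, hlast, shiftRows, hd, h]
  rw [chainCount_eq_card, chainCount_eq_card]
  exact Nat.card_congr
    { toFun c := ⟨fun k => unshiftRows δ k (c.1 k), by simp [c.2.1], by simp [c.2.2.1],
        c.2.2.2.unshiftRows (hgap _ c.2.1 c.2.2.1)⟩
      invFun c := ⟨fun k => shiftRows δ k (c.1 k), by simp [c.2.1], by simp [c.2.2.1],
        c.2.2.2.shiftRows δ⟩
      left_inv c := Subtype.ext <| funext fun _ => shiftRows_unshiftRows fun _ hi =>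
        ((Nat.le_add_left δ _).trans (hgap _ c.2.1 c.2.2.1)).trans (c.2.2.2.le_apply_of_lt hi)
      right_inv c := Subtype.ext <| funext fun k => unshiftRows_shiftRows δ k (c.1 k) }

/-- For fixed partitions `λ, μ` and `n_1 ≥ … ≥ n_d ≥ |μ| + μ_1`, the number of Pieri chains
from `λ` to `μ[n_1+l,…,n_d+l]` takes the same value for all `l` with `n_d + l ≥ λ_1 + |λ|`. -/
theorem chainCount_stabilizes (d : ℕ) (hd : 1 ≤ d) (lam μ : ℕ → ℕ)
    (hlam : IsPartition lam) (hμ : IsPartition μ)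
    (n : Fin d → ℕ)
    (hbig : ∀ i, psize μ + μ 0 ≤ n i)
    (l₁ l₂ : ℕ)
    (h₁ : lam 0 + psize lam ≤ n ⟨d - 1, by omega⟩ + l₁)
    (h₂ : lam 0 + psize lam ≤ n ⟨d - 1, by omega⟩ + l₂) :
    chainCount d lam (pad d (fun i => n i + l₁) μ) =
      chainCount d lam (pad d (fun i => n i + l₂) μ) := by
  wlog hl : l₁ ≤ l₂ generalizing l₁ l₂
  · exact (this l₂ l₁ h₂ h₁ (by omega)).symm
  by_cases hle : ∀ i, μ i ≤ lam i
  · have hsize := psize_mono hμ hlam hle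
    obtain ⟨δ, rfl⟩ := Nat.exists_eq_add_of_le hl
    simp_rw [← add_assoc]
    rw [pad_add_eq_shiftRows (m := fun i => n i + l₁) fun i => by have := hbig i; omega,
      chainCount_shiftRows hd]
    rw [pad_apply_of_lt _ _ (by omega)]
    omega
  · have hzero : ∀ l, chainCount d lam (pad d (fun i => n i + l) μ) = 0 := fun l =>
      Nat.eq_zero_of_not_pos fun hpos => hle fun i => by simpa using le_of_chainCount_pos hpos i
    rw [hzero, hzero]
end

section
/- Let d ≥ 1, let λ be a partition, let n_1 ≥ … ≥ n_d ≥ |λ| + λ_1 be integers, and set μ := λ[n_1,…,n_d] and s := μ_1 = n_1 − |λ|. Then for every box (i,j) of the Young diagram of μ with 1 ≤ i ≤ d, the hook length satisfies H(i,j) ≤ (s − j) + (d − i) + |λ| + 1. -/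
/-- The conjugate partition: `conjPart μ j` is the number of rows `i` with `μ i > j`
(the length of the `(j+1)`-st column, columns 0-indexed). -/
noncomputable def conjPart (μ : ℕ → ℕ) (j : ℕ) : ℕ := Nat.card {i : ℕ // j < μ i}

/-- The hook length of the box in row `i`, column `j` (both 0-indexed) of `μ`:
in 1-indexed terms `H(i,j) = (μ_i − j) + (μ′_j − i) + 1`. -/
private 
lemma conj_le_psize (lam : ℕ → ℕ) (hlam : ∃ N, ∀ n ≥ N, lam n = 0) (j : ℕ) :
    conjPart lam j ≤ psize lam := by
  obtain ⟨N, hN⟩ := hlam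
  have hsupp : (Function.support lam).Finite :=
    Set.Finite.subset (Set.finite_Iio N) (fun k hk => by
      by_contra h; exact hk (hN k (le_of_not_gt h)))
  have hT : {k : ℕ | j < lam k}.Finite :=
    hsupp.subset (fun k hk => by
      simp only [Set.mem_setOf_eq] at hk
      simp only [Function.mem_support]; omega)
  have : conjPart lam j = {k : ℕ | j < lam k}.ncard := Nat.card_coe_set_eq _
  rw [this, Set.ncard_eq_toFinset_card _ hT, psize, finsum_eq_sum lam hsupp]
  calc hT.toFinset.card = ∑ k ∈ hT.toFinset, 1 := by simp
    _ ≤ ∑ k ∈ hT.toFinset, lam k := Finset.sum_le_sum (fun k hk => by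
        have h2 := (hT.mem_toFinset).mp hk
        simp only [Set.mem_setOf_eq] at h2; omega)
    _ ≤ ∑ k ∈ hsupp.toFinset, lam k := Finset.sum_le_sum_of_subset (fun k hk => by
        simp only [Set.Finite.mem_toFinset, Function.mem_support] at *
        simp only [Set.mem_setOf_eq] at hk; omega)

lemma conj_pad_le (d : ℕ) (n : Fin d → ℕ) (lam : ℕ → ℕ)
    (hlam : ∃ N, ∀ n ≥ N, lam n = 0) (j : ℕ) :
    conjPart (pad d n lam) j ≤ d + conjPart lam j := by
  obtain ⟨N, hN⟩ := hlam
  have hT : {k : ℕ | j < lam k}.Finite :=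
    (Set.finite_Iio N).subset (fun k hk => by
      simp only [Set.mem_setOf_eq] at hk
      by_contra h
      rw [hN k (le_of_not_gt h)] at hk; omega)
  have hsub : {r : ℕ | j < pad d n lam r} ⊆
      Set.Iio d ∪ (fun k => k + d) '' {k : ℕ | j < lam k} := by
    intro r hr
    by_cases h : r < d
    · exact Or.inl h
    · right
      refine ⟨r - d, ?_, show r - d + d = r by omega⟩
      simp only [Set.mem_setOf_eq, pad, dif_neg h] at hr ⊢
      exact hr
  have h1 : conjPart (pad d n lam) j = {r : ℕ | j < pad d n lam r}.ncard :=
    Nat.card_coe_set_eq _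
  have h2 : conjPart lam j = {k : ℕ | j < lam k}.ncard := Nat.card_coe_set_eq _
  rw [h1, h2]
  calc {r : ℕ | j < pad d n lam r}.ncard
      ≤ (Set.Iio d ∪ (fun k => k + d) '' {k : ℕ | j < lam k}).ncard :=
        Set.ncard_le_ncard hsub ((Set.finite_Iio d).union (hT.image _))
    _ ≤ (Set.Iio d).ncard + ((fun k => k + d) '' {k : ℕ | j < lam k}).ncard :=
        Set.ncard_union_le _ _
    _ ≤ d + {k : ℕ | j < lam k}.ncard := by
        have : (Set.Iio d).ncard = d := by
          rw [← Finset.coe_range, Set.ncard_coe_finset]; simp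
        rw [this]
        exact Nat.add_le_add_left (Set.ncard_image_le hT) d

noncomputable def hookLen (μ : ℕ → ℕ) (i j : ℕ) : ℕ :=
  (μ i - (j + 1)) + (conjPart μ j - (i + 1)) + 1

/-- For `μ := λ[n_1,…,n_d]` with `n_1 ≥ … ≥ n_d ≥ |λ| + λ_1` and `s := μ_1 = n_1 − |λ|`,
every box `(i,j)` of `μ` in the first `d` rows has hook length at most
`(s − j) + (d − i) + |λ| + 1` (1-indexed; here rows and columns are 0-indexed, so the box
is `(i,j)` with `i < d`, `j < μ i`, and the bound reads
`(s − (j+1)) + (d − (i+1)) + |λ| + 1`). -/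
theorem hook_length_bound (d : ℕ) (hd : 1 ≤ d)
    (lam : ℕ → ℕ) (hlam : IsPartition lam)
    (n : Fin d → ℕ) (hmono : Antitone n)
    (hbig : ∀ i, psize lam + lam 0 ≤ n i)
    (i j : ℕ) (hi : i < d) (hj : j < pad d n lam i) :
    hookLen (pad d n lam) i j ≤
      ((n ⟨0, by omega⟩ - psize lam) - (j + 1)) + (d - (i + 1)) + psize lam + 1 := by
  obtain ⟨hanti, hev⟩ := hlam
  have hpi : pad d n lam i = n ⟨i, hi⟩ - psize lam := dif_pos hi
  have hle : n ⟨i, hi⟩ ≤ n ⟨0, by omega⟩ := hmono (Fin.mk_le_mk.mpr (Nat.zero_le i))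
  have h1 : pad d n lam i ≤ n ⟨0, by omega⟩ - psize lam := by
    rw [hpi]; exact Nat.sub_le_sub_right hle _
  have h2 : conjPart (pad d n lam) j ≤ d + psize lam :=
    le_trans (conj_pad_le d n lam hev j)
      (by have := conj_le_psize lam hev j; omega)
  unfold hookLen
  omega
end

section
/- Fix an integer d ≥ 2, a partition λ with m := |λ|, and integers n_1 ≥ … ≥ n_d ≥ m + λ_1. For each integer l ≥ 0 set μ^{(l)} := λ[n_1+l, …, n_d+l], s_l := n_1 + l − m, N_l := |μ^{(l)}|, and F(l) := N_l! / ∏_{(i,j) ∈ μ^{(l)}} H(i,j), where the product of hook lengths runs over all boxes of the Young diagram of μ^{(l)}. Then there exists a polynomial q ∈ ℚ[x] with q(l) > 0 for all l ≥ 0 such that q(l)·F(l) ≥ d^{d·s_l + d·m} for every l ≥ 0. -/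
/-- The product of the hook lengths over all boxes of the Young diagram of `μ`. -/
noncomputable def hookProd (μ : ℕ → ℕ) : ℕ :=
  ∏ᶠ i : ℕ, ∏ j ∈ Finset.range (μ i), hookLen μ i j

/-!
The hook of a box in row `i` fits into the boxes of row `i` from that box on together with all
boxes of the lower rows, so the row products of hooks telescope to at most `|μ|!`; in particular
`F(l) ≥ 1`.  Bounding every hook instead by its arm plus the number `R` of rows, the `d` long rows
contribute at most `t!^d` with `t = max_i μ_i + R` and the short rows a constant.  The balanced
multinomial estimate `d^{dt} t!^d ≤ (t+1)^{d²} (dt)!` together with `dt ≤ |μ| + O(1)` then gives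
`d^{dt} ≤ poly(l) · F(l)`.
-/

open Finset
open scoped Nat

section HookLengths

variable {μ : ℕ → ℕ} {R : ℕ}

theorem psize_eq_sum_range (hR : ∀ i ≥ R, μ i = 0) : psize μ = ∑ i ∈ range R, μ i := by
  refine finsum_eq_sum_of_support_subset μ fun i hi => ?_
  simp only [coe_range, Set.mem_Iio]
  by_contra h
  exact hi (hR i (not_lt.mp h))

theorem hookProd_eq_prod_range (hR : ∀ i ≥ R, μ i = 0) :
    hookProd μ = ∏ i ∈ range R, ∏ j ∈ range (μ i), hookLen μ i j := by
  refine finprod_eq_prod_of_mulSupport_subset _ fun i hi => ?_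
  simp only [coe_range, Set.mem_Iio]
  by_contra h
  simp [hR i (not_lt.mp h)] at hi

theorem hookProd_pos (hR : ∀ i ≥ R, μ i = 0) : 0 < hookProd μ := by
  rw [hookProd_eq_prod_range hR]
  exact prod_pos fun i _ => prod_pos fun j _ => Nat.succ_pos _

theorem conjPart_eq_card_filter (hR : ∀ i ≥ R, μ i = 0) (j : ℕ) :
    conjPart μ j = #{i ∈ range R | j < μ i} := by
  rw [conjPart, ← Nat.card_eq_finsetCard]
  refine Nat.card_congr (Equiv.subtypeEquivRight fun i => ?_)
  simp only [mem_filter, mem_range, iff_and_self]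
  intro hj
  by_contra h
  simp [hR i (not_lt.mp h)] at hj

theorem conjPart_le (hR : ∀ i ≥ R, μ i = 0) (j : ℕ) : conjPart μ j ≤ R := by
  rw [conjPart_eq_card_filter hR]
  exact (card_filter_le _ _).trans (card_range R).le

theorem conjPart_le_add_sum_Ico (hR : ∀ i ≥ R, μ i = 0) {i : ℕ} (hi : i < R) (j : ℕ) :
    conjPart μ j ≤ i + 1 + ∑ k ∈ Ico (i + 1) R, μ k := by
  rw [conjPart_eq_card_filter hR, card_filter, ← sum_range_add_sum_Ico _ hi]
  refine add_le_add ?_ (sum_le_sum fun k _ => by split_ifs <;> omega)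
  calc _ ≤ ∑ _k ∈ range (i + 1), 1 := sum_le_sum fun k _ => by split_ifs <;> omega
    _ = i + 1 := by simp

theorem prod_hookLen_le_descFactorial {i c : ℕ} (hc : ∀ j < μ i, conjPart μ j ≤ i + 1 + c) :
    ∏ j ∈ range (μ i), hookLen μ i j ≤ (μ i + c).descFactorial (μ i) := by
  rw [Nat.descFactorial_eq_prod_range]
  refine prod_le_prod' fun j hj => ?_
  have hj := mem_range.mp hj
  have := hc j hj
  unfold hookLen
  omega

theorem hookProd_le_prod_descFactorial (hR : ∀ i ≥ R, μ i = 0) (c : ℕ → ℕ)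
    (hc : ∀ i < R, ∀ j < μ i, conjPart μ j ≤ i + 1 + c i) :
    hookProd μ ≤ ∏ i ∈ range R, (μ i + c i).descFactorial (μ i) := by
  rw [hookProd_eq_prod_range hR]
  exact prod_le_prod' fun i hi => prod_hookLen_le_descFactorial (hc i (mem_range.mp hi))

theorem prod_range_descFactorial_sum_Ico (f : ℕ → ℕ) (R : ℕ) :
    ∏ i ∈ range R, (f i + ∑ k ∈ Ico (i + 1) R, f k).descFactorial (f i) =
      (∑ i ∈ range R, f i)! := by
  induction R generalizing f with
  | zero => simp
  | succ R ih =>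
    have hshift (i : ℕ) : ∑ k ∈ Ico (i + 1) (R + 1), f k = ∑ k ∈ Ico i R, f (k + 1) :=
      (sum_Ico_add' f i R 1).symm
    simp only [prod_range_succ', sum_range_succ', hshift, ih, Nat.Ico_zero_eq_range]
    rw [add_comm _ (f 0), ← Nat.factorial_mul_descFactorial (Nat.le_add_right _ _),
      Nat.add_sub_cancel_left]

theorem hookProd_le_factorial (hR : ∀ i ≥ R, μ i = 0) : hookProd μ ≤ (psize μ)! := by
  rw [psize_eq_sum_range hR, ← prod_range_descFactorial_sum_Ico]
  exact hookProd_le_prod_descFactorial hR _ fun i hi j _ => conjPart_le_add_sum_Ico hR hi j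

theorem hookProd_le_prod_factorial (hR : ∀ i ≥ R, μ i = 0) :
    hookProd μ ≤ ∏ i ∈ range R, (μ i + R)! := by
  refine (hookProd_le_prod_descFactorial hR (fun _ => R) fun i _ j _ =>
    (conjPart_le hR j).trans (by omega)).trans (prod_le_prod' fun i _ => ?_)
  rw [← Nat.factorial_mul_descFactorial (Nat.le_add_right (μ i) R)]
  exact Nat.le_mul_of_pos_left _ (Nat.factorial_pos _)

end HookLengths

theorem factorial_le_factorial_mul_pow {a b k : ℕ} (h : a ≤ b + k) :
    a ! ≤ b ! * (b + k) ^ k :=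
  calc a ! ≤ (b + k)! := Nat.factorial_le h
    _ = b ! * (b + k).descFactorial k := by
      rw [← Nat.factorial_mul_descFactorial (Nat.le_add_left k b), Nat.add_sub_cancel]
    _ ≤ b ! * (b + k) ^ k := Nat.mul_le_mul_left _ (Nat.descFactorial_le_pow _ _)

theorem add_one_pow_mul_le_add_two_pow_mul (d t : ℕ) :
    (t + 1) ^ d * (d * t + d) ≤ (t + 2) ^ d * (d * t + 1) := by
  rcases d with _ | d
  · simp
  have hB := pow_add_mul_le_add_pow (a := t + 1) (b := 1) (by positivity) (by positivity) (d + 1)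
  simp only [Nat.add_sub_cancel, mul_one, Nat.cast_id] at hB
  have hq : (t + 1) * ((d + 1) * (t + 1)) ≤ (t + 1 + (d + 1)) * ((d + 1) * t + 1) := by
    nlinarith [Nat.zero_le (d * d * t), Nat.zero_le (d * t)]
  calc (t + 1) ^ (d + 1) * ((d + 1) * t + (d + 1))
      = (t + 1) ^ d * ((t + 1) * ((d + 1) * (t + 1))) := by ring
    _ ≤ (t + 1) ^ d * ((t + 1 + (d + 1)) * ((d + 1) * t + 1)) := Nat.mul_le_mul_left _ hq
    _ = ((t + 1) ^ (d + 1) + (d + 1) * (t + 1) ^ d) * ((d + 1) * t + 1) := by ring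
    _ ≤ (t + 2) ^ (d + 1) * ((d + 1) * t + 1) := Nat.mul_le_mul_right _ hB

theorem pow_mul_factorial_pow_le (d t : ℕ) :
    d ^ (d * t) * t ! ^ d ≤ (t + 1) ^ d ^ 2 * (d * t)! := by
  induction t with
  | zero => simp
  | succ t ih =>
    have hasc : (d * t)! * (d * t + 1) ^ d ≤ (d * t + d)! := by
      calc (d * t)! * (d * t + 1) ^ d ≤ (d * t)! * (d * t + d).descFactorial d := by
            have := Nat.pow_sub_le_descFactorial (d * t + d) d
            rw [show d * t + d + 1 - d = d * t + 1 by omega] at this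
            exact Nat.mul_le_mul_left _ this
        _ = (d * t + d)! := by
            rw [← Nat.factorial_mul_descFactorial (Nat.le_add_left d _), Nat.add_sub_cancel]
    have hstep : (t + 1) ^ d ^ 2 * (d * t + d) ^ d ≤ (t + 2) ^ d ^ 2 * (d * t + 1) ^ d := by
      rw [sq, pow_mul, pow_mul, ← mul_pow, ← mul_pow]
      exact Nat.pow_le_pow_left (add_one_pow_mul_le_add_two_pow_mul d t) d
    calc d ^ (d * (t + 1)) * (t + 1)! ^ d = d ^ (d * t) * t ! ^ d * (d * t + d) ^ d := by
          rw [Nat.factorial_succ, show d * t + d = d * (t + 1) by ring, mul_pow, mul_pow]; ring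
      _ ≤ (t + 1) ^ d ^ 2 * (d * t)! * (d * t + d) ^ d := Nat.mul_le_mul_right _ ih
      _ = (d * t)! * ((t + 1) ^ d ^ 2 * (d * t + d) ^ d) := by ring
      _ ≤ (d * t)! * ((t + 2) ^ d ^ 2 * (d * t + 1) ^ d) := Nat.mul_le_mul_left _ hstep
      _ = (t + 2) ^ d ^ 2 * ((d * t)! * (d * t + 1) ^ d) := by ring
      _ ≤ (t + 1 + 1) ^ d ^ 2 * (d * (t + 1))! := by
          rw [mul_add_one]; exact Nat.mul_le_mul_left _ hasc

theorem le_two_mul_mul_div {H F x P : ℕ} (hH : 0 < H) (hHF : H ≤ F) (h : H * x ≤ P * F) :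
    x ≤ 2 * P * (F / H) := by
  have hF : F ≤ 2 * H * (F / H) := by
    have := Nat.div_add_mod F H
    have := Nat.mod_lt F hH
    have : 1 ≤ F / H := (Nat.one_le_div_iff hH).mpr hHF
    nlinarith
  refine Nat.le_of_mul_le_mul_left ?_ hH
  calc H * x ≤ P * F := h
    _ ≤ P * (2 * H * (F / H)) := Nat.mul_le_mul_left _ hF
    _ = H * (2 * P * (F / H)) := by ring

theorem exists_polynomial_of_le_mul_pow {K c e G : ℕ} (hK : 0 < K) (hc : 0 < c)
    {x y : ℕ → ℕ} (h : ∀ l, x l ≤ K * (c + e * l) ^ G * y l) :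
    ∃ q : Polynomial ℚ, (∀ l : ℕ, 0 < q.eval (l : ℚ)) ∧
      ∀ l : ℕ, (x l : ℚ) ≤ q.eval (l : ℚ) * y l := by
  refine ⟨.C (K : ℚ) * (.C (c : ℚ) + .C (e : ℚ) * .X) ^ G, fun l => ?_, fun l => ?_⟩ <;>
    simp only [Polynomial.eval_mul, Polynomial.eval_pow, Polynomial.eval_add, Polynomial.eval_C,
      Polynomial.eval_X]
  · positivity
  · exact_mod_cast h l

section Pad

variable {r : ℕ} {n : Fin r → ℕ} {lam : ℕ → ℕ} {h : ℕ}

theorem pad_of_lt {i : ℕ} (hi : i < r) : pad r n lam i = n ⟨i, hi⟩ - psize lam := dif_pos hi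

theorem pad_add (k : ℕ) : pad r n lam (r + k) = lam k := by simp [pad]

theorem pad_eq_zero (hh : ∀ k ≥ h, lam k = 0) : ∀ i ≥ r + h, pad r n lam i = 0 :=
  fun i hi => by
    obtain ⟨k, rfl⟩ := Nat.exists_eq_add_of_le (le_of_add_le_left hi)
    rw [pad_add]
    exact hh k (by omega)

@[to_additive]
theorem prod_range_pad {M : Type*} [CommMonoid M] (g : ℕ → M) :
    ∏ i ∈ range (r + h), g (pad r n lam i) =
      (∏ i, g (n i - psize lam)) * ∏ k ∈ range h, g (lam k) := by
  rw [prod_range_add, ← Fin.prod_univ_eq_prod_range]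
  simp only [pad_of_lt, Fin.is_lt, pad_add]

theorem psize_pad (hh : ∀ k ≥ h, lam k = 0) :
    psize (pad r n lam) = ∑ i, (n i - psize lam) + psize lam := by
  rw [psize_eq_sum_range (pad_eq_zero hh)]
  exact (sum_range_pad fun x => x).trans (by rw [← psize_eq_sum_range hh])

theorem hookProd_pad_mul_pow_le (hh : ∀ k ≥ h, lam k = 0) {t : ℕ}
    (ht : ∀ i, n i - psize lam + (r + h) ≤ t) :
    hookProd (pad r n lam) * r ^ (r * t) ≤
      (∏ k ∈ range h, (lam k + (r + h))!) * ((t + 1) ^ r ^ 2 * (r * t)!) := by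
  have hrows : ∏ i, (n i - psize lam + (r + h))! ≤ t ! ^ r :=
    calc _ ≤ ∏ _i : Fin r, t ! := prod_le_prod' fun i _ => Nat.factorial_le (ht i)
      _ = t ! ^ r := Fin.prod_const r _
  have hH : hookProd (pad r n lam) ≤ t ! ^ r * ∏ k ∈ range h, (lam k + (r + h))! :=
    calc _ ≤ ∏ i ∈ range (r + h), (pad r n lam i + (r + h))! :=
          hookProd_le_prod_factorial (pad_eq_zero hh)
      _ = (∏ i, (n i - psize lam + (r + h))!) * ∏ k ∈ range h, (lam k + (r + h))! :=
          prod_range_pad fun x => (x + (r + h))!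
      _ ≤ _ := Nat.mul_le_mul_right _ hrows
  calc _ ≤ t ! ^ r * (∏ k ∈ range h, (lam k + (r + h))!) * r ^ (r * t) :=
        Nat.mul_le_mul_right _ hH
    _ = (∏ k ∈ range h, (lam k + (r + h))!) * (r ^ (r * t) * t ! ^ r) := by ring
    _ ≤ _ := Nat.mul_le_mul_left _ (pow_mul_factorial_pow_le r t)

theorem hookProd_pad_mul_pow_le_mul_factorial (hh : ∀ k ≥ h, lam k = 0) {t C L : ℕ}
    (ht : ∀ i, n i - psize lam + (r + h) ≤ t) (hdt : r * t ≤ psize (pad r n lam) + C)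
    (htL : t + 1 ≤ L) (hNL : psize (pad r n lam) + C ≤ L) :
    hookProd (pad r n lam) * r ^ (r * t) ≤
      (∏ k ∈ range h, (lam k + (r + h))!) * (L ^ (r ^ 2 + C) * (psize (pad r n lam))!) := by
  refine (hookProd_pad_mul_pow_le hh ht).trans (Nat.mul_le_mul_left _ ?_)
  calc (t + 1) ^ r ^ 2 * (r * t)!
      ≤ L ^ r ^ 2 * ((psize (pad r n lam))! * L ^ C) := by
        gcongr
        exact (factorial_le_factorial_mul_pow hdt).trans (by gcongr)
    _ = _ := by ring

end Pad

theorem mul_sup_add_sub_le_sum {d : ℕ} (n : Fin d → ℕ) (l m : ℕ) :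
    d * (univ.sup n + l - m) ≤ ∑ i, (n i + l - m) + ∑ i, (univ.sup n - n i) :=
  calc d * (univ.sup n + l - m) = ∑ _i : Fin d, (univ.sup n + l - m) := by simp
    _ ≤ ∑ i, ((n i + l - m) + (univ.sup n - n i)) :=
        sum_le_sum fun i _ => by have : n i ≤ univ.sup n := le_sup (mem_univ i); omega
    _ = _ := sum_add_distrib

theorem exists_pow_le_mul_pow_mul_factorial_div_hookProd_pad {d h : ℕ} (hd : 0 < d)
    {lam : ℕ → ℕ} (hh : ∀ k ≥ h, lam k = 0) (n : Fin d → ℕ) (i₀ : Fin d) :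
    ∃ K c G : ℕ, 0 < K ∧ 0 < c ∧ ∀ l : ℕ,
      d ^ (d * (n i₀ + l - psize lam) + d * psize lam) ≤
        K * (c + d * l) ^ G * ((psize (pad d (fun i => n i + l) lam))! /
          hookProd (pad d (fun i => n i + l) lam)) := by
  set m := psize lam
  set M := univ.sup n
  set R := d + h
  set C := ∑ i, (M - n i) + d * R
  set c₁ := ∏ k ∈ range h, (lam k + R)!
  refine ⟨2 * (c₁ * d ^ (d * m)), ∑ i, n i + m + C + 1, d ^ 2 + C,
    Nat.mul_pos two_pos (Nat.mul_pos (prod_pos fun k _ => Nat.factorial_pos _) (pow_pos hd _)),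
    by omega, fun l => ?_⟩
  set μ := pad d (fun i => n i + l) lam
  set N := psize μ
  set t := M + l - m + R
  set L := ∑ i, n i + m + C + 1 + d * l
  have hle_sup (i : Fin d) : n i ≤ M := le_sup (mem_univ i)
  have hN : N = ∑ i, (n i + l - m) + m := psize_pad hh
  have hdt : d * t ≤ N + C := by
    have : d * (M + l - m) ≤ ∑ i, (n i + l - m) + ∑ i, (M - n i) :=
      mul_sup_add_sub_le_sum n l m
    rw [mul_add]
    omega
  have hNL : N + C + 1 ≤ L := by
    have : ∑ i, (n i + l - m) ≤ ∑ i, n i + d * l :=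
      calc _ ≤ ∑ i, (n i + l) := sum_le_sum fun i _ => Nat.sub_le _ _
        _ = _ := by simp [sum_add_distrib]
    omega
  have htL : t + 1 ≤ L := by linarith [Nat.le_mul_of_pos_left t hd]
  have hexp : d * (n i₀ + l - m) + d * m ≤ d * m + d * t := by
    have := Nat.mul_le_mul_left d (show n i₀ + l - m ≤ t by have := hle_sup i₀; omega)
    omega
  have hbound : hookProd μ * d ^ (d * (n i₀ + l - m) + d * m) ≤
      c₁ * d ^ (d * m) * (L ^ (d ^ 2 + C) * N !) :=
    calc _ ≤ hookProd μ * (d ^ (d * m) * d ^ (d * t)) := by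
          rw [← pow_add]; exact Nat.mul_le_mul_left _ (Nat.pow_le_pow_right hd hexp)
      _ = d ^ (d * m) * (hookProd μ * d ^ (d * t)) := by ring
      _ ≤ d ^ (d * m) * (c₁ * (L ^ (d ^ 2 + C) * N !)) :=
          Nat.mul_le_mul_left _ <| hookProd_pad_mul_pow_le_mul_factorial hh
            (fun i => by have := hle_sup i; omega) hdt htL (Nat.le_of_succ_le hNL)
      _ = _ := by ring
  exact (le_two_mul_mul_div (P := c₁ * d ^ (d * m) * L ^ (d ^ 2 + C))
    (hookProd_pos (pad_eq_zero hh)) (hookProd_le_factorial (pad_eq_zero hh))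
    (hbound.trans_eq (by ring))).trans_eq (by ring)

/-- Fix `d ≥ 2`, a partition `λ` with `m = |λ|`, and `n_1 ≥ … ≥ n_d ≥ m + λ_1`.  For
`l ≥ 0` put `μ^{(l)} := λ[n_1+l,…,n_d+l]`, `s_l := n_1 + l − m`, and let
`F(l) := |μ^{(l)}|! / ∏ hooks` be the dimension of the corresponding irreducible
(hook length formula).  Then there is a polynomial `q ∈ ℚ[x]`, positive on `ℕ`, with
`q(l)·F(l) ≥ d^{d·s_l + d·m}` for all `l ≥ 0`. -/
theorem padded_dimension_growth (d : ℕ) (hd : 2 ≤ d)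
    (lam : ℕ → ℕ) (hlam : IsPartition lam)
    (n : Fin d → ℕ) :
    ∃ q : Polynomial ℚ, (∀ l : ℕ, 0 < q.eval (l : ℚ)) ∧
      ∀ l : ℕ,
        (d : ℚ) ^ (d * (n ⟨0, by omega⟩ + l - psize lam) + d * psize lam) ≤
          q.eval (l : ℚ) *
            ((psize (pad d (fun i => n i + l) lam)).factorial /
              hookProd (pad d (fun i => n i + l) lam) : ℕ) := by
  obtain ⟨-, h, hh⟩ := hlam
  obtain ⟨K, c, G, hK, hc, hbound⟩ :=
    exists_pow_le_mul_pow_mul_factorial_div_hookProd_pad (by omega) hh n ⟨0, by omega⟩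
  obtain ⟨q, hq, hle⟩ := exists_polynomial_of_le_mul_pow hK hc hbound
  exact ⟨q, hq, fun l => by exact_mod_cast hle l⟩
end

section
/- Let d ≥ 1 and let Ψ : FI_d → FI_d × FI be the functor defined on objects by Ψ([n]) = ([n],[n]) and on morphisms by Ψ((f,g)) = ((f,g), f), where FI denotes the category of finite sets {1,…,n} and injections. Then Ψ satisfies property (F): for every object ([r],[s]) of FI_d × FI there are finitely many objects y_1, …, y_t of FI_d together with morphisms f_i : ([r],[s]) → Ψ(y_i) in FI_d × FI, such that for every object [l] of FI_d and every morphism f : ([r],[s]) → Ψ([l]) in FI_d × FI there exist some i and some morphism g : y_i → [l] in FI_d with f = Ψ(g) ∘ f_i. -/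
/-- A morphism `[m] → [n]` in the category `FI_d`: an injection `f : Fin m → Fin n`
together with a `d`-coloring `g` of the complement of the image of `f`, encoded as
`g : Fin n → Option (Fin d)` with `g x = none` exactly when `x ∈ im f`. -/
structure FIdMor (d m n : ℕ) where
  f : Fin m → Fin n
  inj : Function.Injective f
  g : Fin n → Option (Fin d)
  hg : ∀ x, g x = none ↔ x ∈ Set.range f

/-- `φ` is the composite `G ∘ F` in `FI_d` (where `F : [r] → [p]`, `G : [p] → [l]`):
the injections compose, and the coloring of `φ` agrees with that of `G` outside the image
of `G.f` and is pulled back from the coloring of `F` on the image of `G.f`. -/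
def IsFIdComp {d r p l : ℕ} (G : FIdMor d p l) (F : FIdMor d r p) (φ : FIdMor d r l) : Prop :=
  (∀ x, φ.f x = G.f (F.f x)) ∧
  (∀ x : Fin l, x ∉ Set.range G.f → φ.g x = G.g x) ∧
  (∀ y : Fin p, φ.g (G.f y) = F.g y)


theorem FIdMor.ext' {d m n : ℕ} {F G : FIdMor d m n} (hf : F.f = G.f) (hg : F.g = G.g) :
    F = G := by
  cases F; cases G; simp_all

noncomputable instance (d m n : ℕ) : Fintype (FIdMor d m n) := by
  classical
  exact Fintype.ofInjective (fun F => (F.f, F.g)) (by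
    intro F G h
    exact FIdMor.ext' (congrArg Prod.fst h) (congrArg Prod.snd h))

/-- The functor `Ψ : FI_d → FI_d × FI`, `Ψ([n]) = ([n],[n])`, `Ψ((f,g)) = ((f,g), f)`,
satisfies property (F): for every object `([r],[s])` of `FI_d × FI` there are finitely many
objects `y_1,…,y_t` of `FI_d` and morphisms `f_i : ([r],[s]) → Ψ(y_i)` (an FI_d-morphism
`[r] → [y_i]` together with an injection `[s] → [y_i]`) such that every morphism
`([r],[s]) → Ψ([l])` — a pair of an FI_d-morphism `φ : [r] → [l]` and an injection
`ψ : [s] → [l]` — factors as `Ψ(G) ∘ f_i` for some `i` and some FI_d-morphism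
`G : [y_i] → [l]`. -/
theorem FId_to_FId_prod_FI_property_F (d : ℕ) (hd : 1 ≤ d) (r s : ℕ) :
    ∃ (t : ℕ) (y : Fin t → ℕ)
      (F₁ : (i : Fin t) → FIdMor d r (y i))
      (F₂ : (i : Fin t) → {ψ : Fin s → Fin (y i) // Function.Injective ψ}),
      ∀ (l : ℕ) (φ : FIdMor d r l) (ψ : Fin s → Fin l), Function.Injective ψ →
        ∃ (i : Fin t) (G : FIdMor d (y i) l),
          IsFIdComp G (F₁ i) φ ∧ ∀ x, ψ x = G.f ((F₂ i).1 x) := by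
  classical
  let I := Σ p : Fin (r + s + 1), FIdMor d r p.val × {ψ : Fin s → Fin p.val // Function.Injective ψ}
  let e0 : I ≃ Fin (Fintype.card I) := Fintype.equivFin I
  refine ⟨Fintype.card I, fun i => ((e0.symm i).1 : ℕ),
    fun i => (e0.symm i).2.1, fun i => (e0.symm i).2.2, ?_⟩
  intro l φ ψ hψ
  -- the finset of all elements hit by φ.f or ψ
  set S : Finset (Fin l) := (Finset.image φ.f Finset.univ) ∪ (Finset.image ψ Finset.univ) with hS
  have memφ : ∀ x, φ.f x ∈ S := fun x =>
    Finset.mem_union_left _ (Finset.mem_image_of_mem _ (Finset.mem_univ x))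
  have memψ : ∀ x, ψ x ∈ S := fun x =>
    Finset.mem_union_right _ (Finset.mem_image_of_mem _ (Finset.mem_univ x))
  have hp : S.card ≤ r + s := by
    refine le_trans (Finset.card_union_le _ _) (add_le_add ?_ ?_) <;>
      exact le_trans Finset.card_image_le (by simp)
  let e : Fin S.card ≃ {x // x ∈ S} := S.equivFin.symm
  -- the morphism G
  have rangeG : ∀ x : Fin l, x ∈ S → x ∈ Set.range (fun y : Fin S.card => (e y : Fin l)) := by
    intro x hx
    exact ⟨e.symm ⟨x, hx⟩, by simp⟩
  let G : FIdMor d S.card l :=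
    { f := fun y => (e y : Fin l)
      inj := fun a b hab => e.injective (Subtype.val_injective hab)
      g := fun x => if x ∈ S then none else φ.g x
      hg := by
        intro x
        by_cases hx : x ∈ S
        · simp only [hx, if_true, true_iff]
          exact rangeG x hx
        · simp only [hx, if_false]
          constructor
          · intro h
            obtain ⟨a, ha⟩ := (φ.hg x).mp h
            exact absurd (ha ▸ memφ a) hx
          · rintro ⟨a, ha⟩
            exact absurd (ha ▸ (e a).2) hx }
  -- the morphism F
  let F : FIdMor d r S.card :=
    { f := fun x => e.symm ⟨φ.f x, memφ x⟩
      inj := fun a b hab => φ.inj (congrArg (Subtype.val) (e.symm.injective hab) : φ.f a = φ.f b)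
      g := fun y => φ.g (e y)
      hg := by
        intro y
        rw [φ.hg]
        constructor
        · rintro ⟨a, ha⟩
          refine ⟨a, ?_⟩
          show e.symm ⟨φ.f a, memφ a⟩ = y
          have : (⟨φ.f a, memφ a⟩ : {x // x ∈ S}) = e y := Subtype.ext ha
          rw [this]; simp
        · rintro ⟨a, ha⟩
          refine ⟨a, ?_⟩
          have : e y = ⟨φ.f a, memφ a⟩ := by rw [← ha]; simp
          rw [this] }
  let F2 : {f : Fin s → Fin S.card // Function.Injective f} :=
    ⟨fun x => e.symm ⟨ψ x, memψ x⟩,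
     fun a b hab => hψ (congrArg Subtype.val (e.symm.injective hab) : ψ a = ψ b)⟩
  have hple : S.card < r + s + 1 := Nat.lt_succ_of_le hp
  refine ⟨e0 ⟨⟨S.card, hple⟩, F, F2⟩, ?_⟩
  beta_reduce
  rw [Equiv.symm_apply_apply]
  refine ⟨G, ⟨?_, ?_, ?_⟩, ?_⟩
  · intro x; show φ.f x = (e (e.symm ⟨φ.f x, memφ x⟩) : Fin l); simp
  · intro x hx
    have hxS : x ∉ S := fun h => hx (rangeG x h)
    show φ.g x = if x ∈ S then none else φ.g x
    simp [hxS]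
  · intro y; rfl
  · intro x; show ψ x = (e (e.symm ⟨ψ x, memψ x⟩) : Fin l); simp
end
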